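/- Let h ⊆ h^I be a Lie subalgebra which is a Berger algebra, i.e. h = span{R(x,y) : R ∈ K(h), x,y ∈ ℝ⁷}. If h contains an element h(A,v,u,y) with tr A ≠ 0, then there exists y ∈ ℝ² with y ≠ 0 and h(0,0,0,y) ∈ h. -/

import Mathlib

noncomputable section

open scoped Matrix

attribute [local instance 100] LieRing.ofAssociativeRing

abbrev V7 : Type := Fin 7 → ℝ
abbrev M7 : Type := Matrix (Fin 7) (Fin 7) ℝ
abbrev M2 : Type := Matrix (Fin 2) (Fin 2) ℝ

/-- standard basis vectors of `V7` -/
def stdB (i : Fin 7) : V7 := Pi.single i 1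

/-- the symmetric bilinear form of signature (4,3):
`⟨x,y⟩ = x₁y₅ + x₅y₁ + x₂y₆ + x₆y₂ + x₃y₇ + x₇y₃ − x₄y₄` (1-indexed). -/
def bform (x y : V7) : ℝ :=
  x 0 * y 4 + x 4 * y 0 + x 1 * y 5 + x 5 * y 1 + x 2 * y 6 + x 6 * y 2 - x 3 * y 3

/-- `e^i ∧ e^j ∧ e^k` evaluated on a triple of vectors. -/
def wedge3 (i j k : Fin 7) (u v w : V7) : ℝ :=
  u i * (v j * w k - v k * w j) - u j * (v i * w k - v k * w i)
    + u k * (v i * w j - v j * w i)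

/-- the generic 3-form
`ω₀ = √2(e¹∧e⁶∧e⁷ + e²∧e³∧e⁵) − e⁴∧(e¹∧e⁵ − e²∧e⁶ − e³∧e⁷)` (1-indexed). -/
def omega0 (u v w : V7) : ℝ :=
  Real.sqrt 2 * (wedge3 0 5 6 u v w + wedge3 1 2 4 u v w)
    - (wedge3 3 0 4 u v w - wedge3 3 1 5 u v w - wedge3 3 2 6 u v w)

/-- membership in `g₂*` -/
def inG2 (X : M7) : Prop :=
  ∀ u v w : V7,
    omega0 (X.mulVec u) v w + omega0 u (X.mulVec v) w + omega0 u v (X.mulVec w) = 0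

def InvariantUnder (h : LieSubalgebra ℝ M7) (U : Submodule ℝ V7) : Prop :=
  ∀ X ∈ h, ∀ v ∈ U, X.mulVec v ∈ U

def IsIsotropic (U : Submodule ℝ V7) : Prop :=
  ∀ u ∈ U, ∀ u' ∈ U, bform u u' = 0

def IsNondeg (U : Submodule ℝ V7) : Prop :=
  ∀ u ∈ U, (∀ u' ∈ U, bform u u' = 0) → u = 0

def IsIndecomposable (h : LieSubalgebra ℝ M7) : Prop :=
  ∀ U : Submodule ℝ V7, InvariantUnder h U → U ≠ ⊥ → U ≠ ⊤ → ¬ IsNondeg U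

def IsIrreducibleSub (h : LieSubalgebra ℝ M7) (U : Submodule ℝ V7) : Prop :=
  InvariantUnder h U ∧ U ≠ ⊥ ∧
    ∀ W : Submodule ℝ V7, InvariantUnder h W → W ≤ U → W = ⊥ ∨ W = U

/-- the socle: sum of all irreducible invariant subspaces -/
def socleV (h : LieSubalgebra ℝ M7) : Submodule ℝ V7 :=
  sSup {U | IsIrreducibleSub h U}

def sqrt2 : ℝ := Real.sqrt 2

/-- the matrix `h(A,v,u,y)` of the Type I normal form -/
def hImat (A : M2) (v : ℝ) (u y : Fin 2 → ℝ) : M7 :=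
  !![A.trace, -u 1, u 0, sqrt2 * v, 0, -y 0, -y 1;
     0, A 0 0, A 0 1, sqrt2 * u 0, y 0, 0, v;
     0, A 1 0, A 1 1, sqrt2 * u 1, y 1, -v, 0;
     0, 0, 0, 0, sqrt2 * v, sqrt2 * u 0, sqrt2 * u 1;
     0, 0, 0, 0, -A.trace, 0, 0;
     0, 0, 0, 0, u 1, -A 0 0, -A 1 0;
     0, 0, 0, 0, -u 0, -A 0 1, -A 1 1]

def hIset : Set M7 := {X | ∃ A v u y, X = hImat A v u y}

def mSet : Set M7 := {X | ∃ v u y, X = hImat 0 v u y}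

def hsSet : Set M7 := {X | ∃ A v y, X = hImat A v 0 y}

/-- a basis realizing the Type I normal form -/
def TypeIBasis (b : Module.Basis (Fin 7) ℝ V7) : Prop :=
  (∀ i j, bform (b i) (b j) = bform (stdB i) (stdB j)) ∧
  (∀ i j k, omega0 (b i) (b j) (b k) = omega0 (stdB i) (stdB j) (stdB k))

/-- the matrix of (the endomorphism given by) `X` with respect to the basis `b` -/
def matrixWrt (b : Module.Basis (Fin 7) ℝ V7) (X : M7) : M7 :=
  LinearMap.toMatrix b b X.mulVecLin

def matSet (b : Module.Basis (Fin 7) ℝ V7) (h : LieSubalgebra ℝ M7) : Set M7 :=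
  matrixWrt b '' (h : Set M7)

/-- the space `K(S)` of algebraic curvature maps with values in `S` -/
def curvSet (S : Set M7) : Set (V7 →ₗ[ℝ] V7 →ₗ[ℝ] M7) :=
  {R | (∀ x, R x x = 0) ∧ (∀ x y, R x y ∈ S) ∧
    ∀ x y z, (R x y).mulVec z + (R y z).mulVec x + (R z x).mulVec y = 0}

/-- `h` is a Berger algebra -/
def IsBerger (h : LieSubalgebra ℝ M7) : Prop :=
  h.toSubmodule =
    Submodule.span ℝ {X | ∃ R ∈ curvSet (h : Set M7), ∃ x y : V7, X = R x y}

def Cmat (a : ℝ) : M2 := !![a, -1; 1, a]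
def Smat : M2 := !![1, 1; 0, 1]
def Nmat : M2 := !![0, 1; 0, 0]
def Dmat (μ : ℝ) : M2 := !![1, 0; 0, μ]
def diagSet : Set M2 := {A | ∃ a d : ℝ, A = !![a, 0; 0, d]}
def u1Set : Set M2 := {A | ∃ a b : ℝ, A = !![a, -b; b, a]}
def b2Set : Set M2 := {A | A 1 0 = 0}
def b2hatSet : Set M2 := {A | ∃ s t : ℝ, A = s • (1 : M2) + t • Nmat}
def sLamSet (lam : ℝ) : Set M2 :=
  {A | ∃ s t : ℝ, A = s • !![lam, 0; 0, lam - 1] + t • Nmat}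
def slSet : Set M2 := {A | A.trace = 0}
def spanLine (X : M2) : Set M2 := {A | ∃ t : ℝ, A = t • X}

/-- the projection `h(A,v,u,y) ↦ A` applied to a subset of `h^I` -/
def aprojI (S : Set M7) : Set M2 := {A | ∃ v u y, hImat A v u y ∈ S}

/-- `a ⋉ m` inside `h^I` -/
def semidirI (aS : Set M2) : Set M7 :=
  {X | ∃ A ∈ aS, ∃ v u y, X = hImat A v u y}

def bformII (x y : V7) : ℝ :=
  x 0 * y 5 + x 5 * y 0 + x 1 * y 6 + x 6 * y 1 + x 2 * y 4 + x 4 * y 2 - x 3 * y 3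

def omegaII (u v w : V7) : ℝ :=
  Real.sqrt 2 * (-(wedge3 0 4 6 u v w) + wedge3 1 2 5 u v w)
    - (wedge3 3 0 5 u v w - wedge3 3 1 6 u v w - wedge3 3 2 4 u v w)

/-- a basis realizing the Type II normal form -/
def TypeIIBasis (b : Module.Basis (Fin 7) ℝ V7) : Prop :=
  (∀ i j, bform (b i) (b j) = bformII (stdB i) (stdB j)) ∧
  (∀ i j k, omega0 (b i) (b j) (b k) = omegaII (stdB i) (stdB j) (stdB k))

def sigmaMat (z : Fin 4 → ℝ) : Matrix (Fin 2) (Fin 3) ℝ :=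
  !![z 1, sqrt2 * z 2, z 3; z 0, sqrt2 * z 1, z 2]

def rhoMat (A : M2) : Matrix (Fin 3) (Fin 3) ℝ :=
  !![A 0 0 - A 1 1, -(sqrt2 * A 0 1), 0;
     -(sqrt2 * A 1 0), 0, -(sqrt2 * A 0 1);
     0, -(sqrt2 * A 1 0), -(A 0 0) + A 1 1]

/-- the matrix `h(A,z,c)` of the Type II normal form -/
def hIImat (A : M2) (z : Fin 4 → ℝ) (c : ℝ) : M7 :=
  !![A 0 0, A 0 1, z 1, sqrt2 * z 2, z 3, 0, -c;
     A 1 0, A 1 1, z 0, sqrt2 * z 1, z 2, c, 0;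
     0, 0, A 0 0 - A 1 1, -(sqrt2 * A 0 1), 0, -z 3, -z 2;
     0, 0, -(sqrt2 * A 1 0), 0, -(sqrt2 * A 0 1), sqrt2 * z 2, sqrt2 * z 1;
     0, 0, 0, -(sqrt2 * A 1 0), -(A 0 0) + A 1 1, -z 1, -z 0;
     0, 0, 0, 0, 0, -(A 0 0), -(A 1 0);
     0, 0, 0, 0, 0, -(A 0 1), -(A 1 1)]

def hIIset : Set M7 := {X | ∃ A z c, X = hIImat A z c}

def nSet : Set M7 := {X | ∃ z c, X = hIImat 0 z c}

/-- the projection `h(A,z,c) ↦ A` applied to a subset of `h^II` -/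
def aprojII (S : Set M7) : Set M2 := {A | ∃ z c, hIImat A z c ∈ S}

/-- `a ⋉ n₁` inside `h^II`, for `n₁ = {h(0,z,c) : z ∈ Z, c ∈ ℝ}` -/
def semidirII (aS : Set M2) (Z : Set (Fin 4 → ℝ)) : Set M7 :=
  {X | ∃ A ∈ aS, ∃ z ∈ Z, ∃ c : ℝ, X = hIImat A z c}

/-- `ℝ·h(A₀,z₀,0) + {h(0,z,c) : z ∈ Z, c ∈ ℝ}` inside `h^II` -/
def affSemiII (A0 : M2) (z0 : Fin 4 → ℝ) (Z : Set (Fin 4 → ℝ)) : Set M7 :=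
  {X | ∃ t : ℝ, ∃ z ∈ Z, ∃ c : ℝ, X = hIImat (t • A0) (t • z0 + z) c}

/-- the space of `z ∈ ℝ⁴` supported on the index set `s` -/
def nZ (s : Set (Fin 4)) : Set (Fin 4 → ℝ) := {z | ∀ l, l ∉ s → z l = 0}

abbrev Poly2 := MvPolynomial (Fin 2) ℝ
def Px : Poly2 := MvPolynomial.X 0
def Py : Poly2 := MvPolynomial.X 1

/-- the `GL(2,ℝ)`-action `(A·p)(x,y) = p((x,y)A)` on polynomials -/
def polyAct (A : M2) (p : Poly2) : Poly2 :=
  MvPolynomial.aeval (fun i => A 0 i • Px + A 1 i • Py) p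

/-- projective equivalence of polynomials -/
def ProjEquiv (p q : Poly2) : Prop :=
  ∃ A : M2, IsUnit A ∧ ∃ c : ℝ, c ≠ 0 ∧ polyAct A p = c • q

/-! For `R ∈ K(h^I)` put `Q(x,y,z,w) = ⟨R(x,y)z, w⟩` (basis `e₀, …, e₆` as in `stdB`). Since `h^I`
is skew for `⟨·,·⟩`, `Q` has the pair symmetry of an algebraic curvature tensor. The trace `tr A`
of `R(x,y)` is its `(0,0)`-entry `Q(x,y,e₀,e₄)`, so pair symmetry turns it into
`⟨R(e₀,e₄)x, y⟩`. On the other hand the Bianchi identity for `(x, y, e₀)`, with pair symmetry moving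
the other two terms onto row `4` and column `0` of `h^I` (which only carry `tr A`), shows that this
trace form vanishes unless `x` or `y` has an `e₄`-component. Hence `R(e₀,e₄)` has no entries off
row `0` and column `4`, which forces `R(e₀,e₄) = h(0,0,0,y)`. As `h` is Berger and contains an
element with `tr A ≠ 0`, some `R ∈ K(h)` has a nonzero trace form, so `y ≠ 0`. -/

open Matrix

theorem pair_symm_of_bianchi {k V : Type*} [Field k] [NeZero (2 : k)] (Q : V → V → V → V → k)
    (h12 : ∀ x y z w, Q y x z w = -Q x y z w) (h34 : ∀ x y z w, Q x y w z = -Q x y z w)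
    (hB : ∀ x y z w, Q x y z w + Q y z x w + Q z x y w = 0) (x y z w : V) :
    Q x y z w = Q z w x y := by
  refine mul_left_cancel₀ (two_ne_zero (α := k)) ?_
  linear_combination hB x y z w + h34 x y z w - hB x y w z - h12 x z y w + h34 x z y w
    - hB x z w y + h12 x w y z - h34 x w y z + h12 x w z y - h34 y z x w + hB y z w x
    + h34 y w x z - h12 y w z x - h34 z w x y

theorem bform_add_left (x y z : V7) : bform (x + y) z = bform x z + bform y z := by
  simp only [bform, Pi.add_apply]
  ring

theorem bform_smul_left (c : ℝ) (x z : V7) : bform (c • x) z = c * bform x z := by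
  simp only [bform, Pi.smul_apply, smul_eq_mul]
  ring

theorem bform_stdB_zero_right (z : V7) : bform z (stdB 0) = z 4 := by
  simp [bform, stdB]

theorem bform_stdB_four_right (z : V7) : bform z (stdB 4) = z 0 := by
  simp [bform, stdB]

theorem bform_stdB_zero_left (z : V7) : bform (stdB 0) z = z 4 := by
  simp [bform, stdB]

theorem apply_eq_zero_of_forall_bform_eq_zero {z : V7} (hz : ∀ w : V7, w 4 = 0 → bform z w = 0)
    {i : Fin 7} (hi : i ≠ 0) : z i = 0 := by
  fin_cases i
  · exact (hi rfl).elim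
  · simpa [bform, stdB] using hz (stdB 5) (by simp [stdB])
  · simpa [bform, stdB] using hz (stdB 6) (by simp [stdB])
  · simpa [bform, stdB] using hz (stdB 3) (by simp [stdB])
  · simpa [bform, stdB] using hz (stdB 0) (by simp [stdB])
  · simpa [bform, stdB] using hz (stdB 1) (by simp [stdB])
  · simpa [bform, stdB] using hz (stdB 2) (by simp [stdB])

section hIset

variable {X : M7}

theorem bform_mulVec_of_mem_hIset (hX : X ∈ hIset) (z w : V7) :
    bform (X *ᵥ z) w = -bform z (X *ᵥ w) := by
  obtain ⟨A, v, u, y, rfl⟩ := hX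
  simp [bform, hImat, mulVec, dotProduct, Fin.sum_univ_succ, trace_fin_two]
  ring

theorem mulVec_stdB_zero_of_mem_hIset (hX : X ∈ hIset) : X *ᵥ stdB 0 = X 0 0 • stdB 0 := by
  obtain ⟨A, v, u, y, rfl⟩ := hX
  ext i
  fin_cases i <;> simp [stdB, hImat]

theorem mulVec_apply_four_of_mem_hIset (hX : X ∈ hIset) (z : V7) :
    (X *ᵥ z) 4 = -(X 0 0 * z 4) := by
  obtain ⟨A, v, u, y, rfl⟩ := hX
  simp [hImat, mulVec, dotProduct, Fin.sum_univ_succ]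

end hIset

theorem hImat_eq_of_apply_eq_zero {A : M2} {v : ℝ} {u y : Fin 2 → ℝ}
    (h : ∀ i j, i ≠ 0 → j ≠ 4 → hImat A v u y i j = 0) : hImat A v u y = hImat 0 0 0 y := by
  have hsqrt2 : sqrt2 ≠ 0 := by unfold sqrt2; positivity
  have hA : A = 0 := by
    ext i j
    fin_cases i <;> fin_cases j
    · simpa [hImat] using h 1 1
    · simpa [hImat] using h 1 2
    · simpa [hImat] using h 2 1
    · simpa [hImat] using h 2 2
  have hu : u = 0 := by
    ext i
    fin_cases i
    · simpa [hImat, hsqrt2] using h 1 3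
    · simpa [hImat, hsqrt2] using h 2 3
  have hv : v = 0 := by simpa [hImat] using h 1 6
  rw [hA, hu, hv]

theorem curvSet_mono {S T : Set M7} (hST : S ⊆ T) : curvSet S ⊆ curvSet T :=
  fun _ ⟨halt, hS, hB⟩ => ⟨halt, fun x y => hST (hS x y), hB⟩

theorem IsBerger.exists_curvSet_apply_ne_zero {h : LieSubalgebra ℝ M7} (hb : IsBerger h)
    (f : M7 →ₗ[ℝ] ℝ) {X : M7} (hX : X ∈ h) (hfX : f X ≠ 0) :
    ∃ R ∈ curvSet (h : Set M7), ∃ x y, f (R x y) ≠ 0 := by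
  by_contra! hcon
  have hle : h.toSubmodule ≤ LinearMap.ker f := hb ▸ Submodule.span_le.mpr <| by
    rintro _ ⟨R, hR, x, y, rfl⟩
    exact hcon R hR x y
  exact hfX (hle hX)

section Curvature

variable {R : V7 →ₗ[ℝ] V7 →ₗ[ℝ] M7}

theorem curvSet_apply_swap {S : Set M7} (hR : R ∈ curvSet S) (x y : V7) : R y x = -R x y := by
  have h := hR.1 (x + y)
  simp only [map_add, LinearMap.add_apply, hR.1, zero_add, add_zero] at h
  exact eq_neg_of_add_eq_zero_left h

theorem bform_curvSet_bianchi {S : Set M7} (hR : R ∈ curvSet S) (x y z w : V7) :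
    bform (R x y *ᵥ z) w + bform (R y z *ᵥ x) w + bform (R z x *ᵥ y) w = 0 := by
  rw [← bform_add_left, ← bform_add_left, hR.2.2, ← zero_smul ℝ w, bform_smul_left, zero_mul]

theorem bform_curv_pair_symm (hR : R ∈ curvSet hIset) (x y z w : V7) :
    bform (R x y *ᵥ z) w = bform (R z w *ᵥ x) y := by
  refine pair_symm_of_bianchi (fun x y z w => bform (R x y *ᵥ z) w) (fun x y z w => ?_)
    (fun x y z w => ?_) (bform_curvSet_bianchi hR) x y z w
  · rw [curvSet_apply_swap hR, neg_mulVec, ← neg_one_smul ℝ, bform_smul_left, neg_one_mul]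
  · rw [bform_mulVec_of_mem_hIset (hR.2.1 x y)]
    simp only [bform]
    ring

theorem curv_apply_zero_zero_eq_bform (hR : R ∈ curvSet hIset) (x y : V7) :
    R x y 0 0 = bform (R (stdB 0) (stdB 4) *ᵥ x) y := by
  rw [← bform_curv_pair_symm hR, bform_stdB_four_right, stdB, mulVec_single_one]
  rfl

theorem curv_apply_zero_zero_eq_sub (hR : R ∈ curvSet hIset) (x y : V7) :
    R x y 0 0 = R x (stdB 4) 0 0 * y 4 - R y (stdB 4) 0 0 * x 4 := by
  have hB := bform_curvSet_bianchi hR x y (stdB 0) (stdB 4)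
  rw [bform_curv_pair_symm hR y, bform_curv_pair_symm hR (stdB 0), bform_stdB_zero_right,
    mulVec_apply_four_of_mem_hIset (hR.2.1 x _), mulVec_stdB_zero_of_mem_hIset (hR.2.1 x y),
    mulVec_stdB_zero_of_mem_hIset (hR.2.1 y _), bform_smul_left, bform_smul_left,
    bform_stdB_four_right, bform_stdB_zero_left] at hB
  simp only [stdB, Pi.single_eq_same, mul_one] at hB ⊢
  linarith

theorem curv_stdB_zero_stdB_four_apply_eq_zero (hR : R ∈ curvSet hIset) {i j : Fin 7}
    (hi : i ≠ 0) (hj : j ≠ 4) : R (stdB 0) (stdB 4) i j = 0 := by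
  have h : (R (stdB 0) (stdB 4) *ᵥ stdB j) i = 0 := by
    refine apply_eq_zero_of_forall_bform_eq_zero (fun w hw => ?_) hi
    rw [← curv_apply_zero_zero_eq_bform hR, curv_apply_zero_zero_eq_sub hR, hw]
    simp [stdB, hj]
  simpa [stdB, mulVec_single_one] using h

end Curvature

theorem hImat_zero : hImat 0 0 0 0 = 0 := by
  ext i j
  fin_cases i <;> fin_cases j <;> simp [hImat]

/-- Corollary 2.7: if a Berger algebra `h ⊆ h^I` contains an element
`h(A,v,u,y)` with `tr A ≠ 0`, then it contains a nonzero element `h(0,0,0,y)`. -/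
theorem stmt11 (h : LieSubalgebra ℝ M7) (hsub : (h : Set M7) ⊆ hIset)
    (hberger : IsBerger h)
    (hA : ∃ (A : M2) (v : ℝ) (u y : Fin 2 → ℝ), hImat A v u y ∈ h ∧ A.trace ≠ 0) :
    ∃ y : Fin 2 → ℝ, y ≠ 0 ∧ hImat 0 0 0 y ∈ h := by
  obtain ⟨A, v, u, y, hmem, htr⟩ := hA
  obtain ⟨R, hR, x, x', hne⟩ :=
    hberger.exists_curvSet_apply_ne_zero (entryLinearMap ℝ ℝ 0 0) hmem htr
  have hRI : R ∈ curvSet hIset := curvSet_mono hsub hR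
  obtain ⟨A', v', u', y', hX⟩ := hsub (hR.2.1 (stdB 0) (stdB 4))
  have hX0 : R (stdB 0) (stdB 4) = hImat 0 0 0 y' :=
    hX ▸ hImat_eq_of_apply_eq_zero fun i j hi hj =>
      hX ▸ curv_stdB_zero_stdB_four_apply_eq_zero hRI hi hj
  refine ⟨y', fun hy => hne ?_, hX0 ▸ hR.2.1 _ _⟩
  rw [entryLinearMap_apply, curv_apply_zero_zero_eq_bform hRI, hX0, hy, hImat_zero, zero_mulVec]
  simp [bform]
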